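/- If symmetric matrices 𝒫₁ and 𝒫₂ both satisfy the Lyapunov equation A X + X Aᵀ = −Q (same right-hand side) for a semistable A, then 𝒫₁ − 𝒫₂ = J (𝒫₁ − 𝒫₂) Jᵀ where J := lim_{t→∞} e^{At}. -/

import Mathlib

open Matrix Filter NormedSpace

/-! Since `A X + X Aᵀ = 0` for `X = P1 - P2`, the curve `t ↦ exp (t A) X exp (t Aᵀ)` has zero
derivative, so it is constantly `X`; letting `t → ∞` it also tends to `J X Jᵀ`. -/

theorem sylvester_sub_eq_zero {R : Type*} [NonUnitalNonAssocRing R] {a b c x y : R}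
    (hx : a * x + x * b = c) (hy : a * y + y * b = c) : a * (x - y) + (x - y) * b = 0 := by
  rw [mul_sub, sub_mul, ← sub_eq_zero.mpr (hx.trans hy.symm)]
  abel

section NormedAlgebra

variable {𝔸 : Type*} [NormedRing 𝔸] [NormedAlgebra ℝ 𝔸] [CompleteSpace 𝔸]

theorem hasDerivAt_exp_smul_mul_mul_exp_smul (a b x : 𝔸) (t : ℝ) :
    HasDerivAt (fun u : ℝ => exp (u • a) * x * exp (u • b))
      (exp (t • a) * (a * x + x * b) * exp (t • b)) t := by
  refine (((hasDerivAt_exp_smul_const a t).mul_const x).mul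
    (hasDerivAt_exp_smul_const' b t)).congr_deriv ?_
  noncomm_ring

theorem exp_smul_mul_mul_exp_smul_eq_self {a b x : 𝔸} (h : a * x + x * b = 0) (t : ℝ) :
    exp (t • a) * x * exp (t • b) = x := by
  have hderiv (s : ℝ) : HasDerivAt (fun u : ℝ => exp (u • a) * x * exp (u • b)) 0 s := by
    simpa [h] using hasDerivAt_exp_smul_mul_mul_exp_smul a b x s
  simpa using is_const_of_deriv_eq_zero (fun s => (hderiv s).differentiableAt)
    (fun s => (hderiv s).deriv) t 0

end NormedAlgebra

theorem Matrix.tendsto_exp_smul_transpose {m : Type*} [Fintype m] [DecidableEq m]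
    {A J : Matrix m m ℝ} (hJ : Tendsto (fun t : ℝ => exp (t • A)) atTop (nhds J)) :
    Tendsto (fun t : ℝ => exp (t • Aᵀ)) atTop (nhds Jᵀ) := by
  simp_rw [← transpose_smul, exp_transpose]
  exact (continuous_id.matrix_transpose.tendsto J).comp hJ

attribute [local instance] Matrix.linftyOpNormedRing Matrix.linftyOpNormedAlgebra

theorem lyapunov_solutions_differ_by_JXJ_general
    {n : ℕ} (A J Q P1 P2 : Matrix (Fin n) (Fin n) ℝ)
    (hJ : Tendsto (fun t : ℝ => exp (t • A)) atTop (nhds J))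
    (hP1 : A * P1 + P1 * Aᵀ = -Q) (hP2 : A * P2 + P2 * Aᵀ = -Q) :
    P1 - P2 = J * (P1 - P2) * Jᵀ := by
  have hconst (t : ℝ) : exp (t • A) * (P1 - P2) * exp (t • Aᵀ) = P1 - P2 :=
    exp_smul_mul_mul_exp_smul_eq_self (sylvester_sub_eq_zero hP1 hP2) t
  have hlim : Tendsto (fun t : ℝ => exp (t • A) * (P1 - P2) * exp (t • Aᵀ)) atTop
      (nhds (J * (P1 - P2) * Jᵀ)) :=
    (hJ.mul_const _).mul (tendsto_exp_smul_transpose hJ)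
  simp only [hconst] at hlim
  exact tendsto_nhds_unique tendsto_const_nhds hlim

/-- If symmetric matrices `𝒫₁` and `𝒫₂` both satisfy the Lyapunov equation
`A X + X Aᵀ = −Q` for a semistable `A`, then `𝒫₁ − 𝒫₂ = J (𝒫₁ − 𝒫₂) Jᵀ`
where `J := lim_{t→∞} e^{At}`. -/
theorem lyapunov_solutions_differ_by_JXJ
    {n : ℕ} (A J Q P1 P2 : Matrix (Fin n) (Fin n) ℝ)
    (hJ : Tendsto (fun t : ℝ => exp (t • A)) atTop (nhds J))
    (hP1_symm : P1ᵀ = P1) (hP2_symm : P2ᵀ = P2)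
    (hP1 : A * P1 + P1 * Aᵀ = -Q) (hP2 : A * P2 + P2 * Aᵀ = -Q) :
    P1 - P2 = J * (P1 - P2) * Jᵀ :=
  lyapunov_solutions_differ_by_JXJ_general A J Q P1 P2 hJ hP1 hP2
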